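/- Let ≤_T be either the lexicographic order with X₁ > X₂ or the graded order with X₂ > X₁. Let 1 ≤ t ≤ 4 with t ≤ ⌊r₁/2⌋ and t ≤ ⌊r₂/2⌋, let e ∈ 𝔽(r₁,r₂) with ω(e) ≤ t, let τ ∈ 𝓘, and let U be the syndrome table afforded by τ and e. Suppose that either (a) l = (0, 2t−1) and F = {f^(1), f^(2)} is a minimal set of polynomials for u^l with defining points s^(1), s^(2) satisfying s^(2)_2 = t, or (b) l = (2t−1, 0) and F = {f^(1), f^(2)} is a minimal set of polynomials for u^l with defining points s^(1), s^(2) satisfying s^(1)_1 = t. Let (g, k) be an auxiliary polynomial for index 1 with v = g[U]_k ≠ 0. Then there exists b ∈ L such that the polynomial h_b, defined as h_b = f^(2) − (b/v)·g in case (a) and h_b = f^(1) − (b/v)·g in case (b), generates u^l and satisfies h_b[U]_{k'} = 0 for every k' ∈ B(2t+1) with l ≤_T k'. -/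

import Mathlib

/-!
A nonzero polynomial supported on a rectangle with more than ω(e) monomials can be chosen to
vanish at all error locations, and then it annihilates the whole syndrome table; so the
rectangle `[0, s⁽¹⁾₁) × [0, s⁽²⁾₂)` under the footprint of a minimal set has at most ω(e) ≤ t
points. When s⁽²⁾₂ = t (resp. s⁽¹⁾₁ = t) this forces s⁽¹⁾₁ ≤ 1 (resp. s⁽²⁾₂ ≤ 1), so the
auxiliary polynomial is aligned with `l`: k − LP(g) = l − LP(f). The Berlekamp–Massey–Sakata
update f − (f[U]_l / v)·g then keeps the leading point of f, still generates u^l and also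
kills u_l. Finally every point of B(2t+1) above LP(f) lies on the axis at or before `l`, hence
is `≤_T l` for any monomial order.
-/

/-- A monomial order on ℕ × ℕ: a linear order compatible with addition
for which (0,0) is the least element. -/
structure MonOrd where
  le : ℕ × ℕ → ℕ × ℕ → Prop
  refl : ∀ a, le a a
  trans : ∀ a b c, le a b → le b c → le a c
  antisymm : ∀ a b, le a b → le b a → a = b
  total : ∀ a b, le a b ∨ le b a
  add_right : ∀ a b c, le a b → le (a + c) (b + c)
  zero_le : ∀ a, le (0, 0) a

/-- Strict version of a monomial order. -/
def MonOrd.lt (T : MonOrd) (a b : ℕ × ℕ) : Prop := T.le a b ∧ a ≠ b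

/-- `s` is the leading power product exponent of `f` w.r.t. `T`. -/
def IsLP {L : Type} [Field L] (T : MonOrd) (f : (ℕ × ℕ) →₀ L) (s : ℕ × ℕ) : Prop :=
  s ∈ f.support ∧ ∀ m ∈ f.support, T.le m s

/-- `f[U]_n`, computed with respect to a given leading exponent `s` of `f`. -/
noncomputable def fApp {L : Type} [Field L] (U : ℕ × ℕ → L) (f : (ℕ × ℕ) →₀ L)
    (s n : ℕ × ℕ) : L :=
  if s.1 ≤ n.1 ∧ s.2 ≤ n.2 then
    ∑ m ∈ f.support, f m * U (m.1 + n.1 - s.1, m.2 + n.2 - s.2)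
  else 0

/-- `f` generates the doubly periodic array `U`. -/
def GeneratesU {L : Type} [Field L] (T : MonOrd) (U : ℕ × ℕ → L) (f : (ℕ × ℕ) →₀ L) : Prop :=
  ∃ s, IsLP T f s ∧ ∀ n, fApp U f s n = 0

/-- `f` generates the finite subarray `u^l` of `U`. -/
def GeneratesUpTo {L : Type} [Field L] (T : MonOrd) (U : ℕ × ℕ → L) (l : ℕ × ℕ)
    (f : (ℕ × ℕ) →₀ L) : Prop :=
  ∃ s, IsLP T f s ∧ ∀ k, s.1 ≤ k.1 → s.2 ≤ k.2 → T.lt k l → fApp U f s k = 0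

/-- `U` is a doubly periodic array of period r₁ × r₂. -/
def DoublyPeriodic {L : Type} (r₁ r₂ : ℕ) (U : ℕ × ℕ → L) : Prop :=
  ∀ n m : ℕ × ℕ, n.1 % r₁ = m.1 % r₁ → n.2 % r₂ = m.2 % r₂ → U n = U m

/-- Evaluation of a bivariate polynomial at a point `(x, y)`. -/
noncomputable def polyEval {L : Type} [Field L] (f : (ℕ × ℕ) →₀ L) (x y : L) : L :=
  ∑ m ∈ f.support, f m * x ^ m.1 * y ^ m.2

/-- The syndrome table afforded by `τ` and `e`:  `u_n = e(α^(τ+n))`. -/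
noncomputable def synTable {F L : Type} [Field F] [Field L] [Algebra F L] {r₁ r₂ : ℕ}
    (α₁ α₂ : L) (τ : Fin r₁ × Fin r₂) (e : Fin r₁ × Fin r₂ → F) : ℕ × ℕ → L :=
  fun n => ∑ p : Fin r₁ × Fin r₂,
    algebraMap F L (e p) * (α₁ ^ ((τ.1 : ℕ) + n.1)) ^ (p.1 : ℕ)
      * (α₂ ^ ((τ.2 : ℕ) + n.2)) ^ (p.2 : ℕ)

/-- The weight ω(e): number of nonzero coefficients. -/
noncomputable def wt {F : Type} [Field F] {r₁ r₂ : ℕ} (e : Fin r₁ × Fin r₂ → F) : ℕ :=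
  {p | e p ≠ 0}.ncard

/-- The hyperbolic set B(δ) of amplitude δ inside {0,…,r₁−1} × {0,…,r₂−1}. -/
def hypB (r₁ r₂ δ : ℕ) : Set (ℕ × ℕ) :=
  {l | l.1 < r₁ ∧ l.2 < r₂ ∧ (l.1 + 1) * (l.2 + 1) ≤ δ ∧ l ≠ (δ - 1, 0) ∧ l ≠ (0, δ - 1)}

/-- The border set 𝔉 = {l ∈ B(2t+1) : 2t ≤ (l₁+1)(l₂+1)}. -/
def frontF (r₁ r₂ t : ℕ) : Set (ℕ × ℕ) :=
  {l ∈ hypB r₁ r₂ (2 * t + 1) | 2 * t ≤ (l.1 + 1) * (l.2 + 1)}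

/-- The lexicographic order with X₁ > X₂. -/
def lexMonOrd : MonOrd where
  le a b := a.1 < b.1 ∨ (a.1 = b.1 ∧ a.2 ≤ b.2)
  refl a := by omega
  trans a b c h1 h2 := by omega
  antisymm a b h1 h2 := by
    obtain ⟨a1, a2⟩ := a; obtain ⟨b1, b2⟩ := b
    simp_all only [Prod.mk.injEq]; omega
  total a b := by omega
  add_right a b c h := by
    obtain ⟨a1, a2⟩ := a; obtain ⟨b1, b2⟩ := b; obtain ⟨c1, c2⟩ := c
    simp_all only [Prod.mk_add_mk]; omega
  zero_le a := by
    obtain ⟨a1, a2⟩ := a; simp only []; omega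

/-- The (reverse) graded order with X₂ > X₁. -/
def grMonOrd : MonOrd where
  le a b := a.1 + a.2 < b.1 + b.2 ∨ (a.1 + a.2 = b.1 + b.2 ∧ a.2 ≤ b.2)
  refl a := by omega
  trans a b c h1 h2 := by omega
  antisymm a b h1 h2 := by
    obtain ⟨a1, a2⟩ := a; obtain ⟨b1, b2⟩ := b
    simp_all only [Prod.mk.injEq]; omega
  total a b := by omega
  add_right a b c h := by
    obtain ⟨a1, a2⟩ := a; obtain ⟨b1, b2⟩ := b; obtain ⟨c1, c2⟩ := c
    simp_all only [Prod.mk_add_mk]; omega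
  zero_le a := by
    obtain ⟨a1, a2⟩ := a; simp only []; omega

/-- The ideal (X₁^{r₁} − 1, X₂^{r₂} − 1) of L[X₁,X₂]. -/
noncomputable def periodIdeal (L : Type) [Field L] (r₁ r₂ : ℕ) :
    Ideal (AddMonoidAlgebra L (ℕ × ℕ)) :=
  Ideal.span {AddMonoidAlgebra.single (r₁, 0) 1 - 1, AddMonoidAlgebra.single (0, r₂) 1 - 1}

namespace MonOrd

variable (T : MonOrd)

lemma le_self_add (a c : ℕ × ℕ) : T.le a (a + c) := by
  have h := T.add_right (0, 0) c a (T.zero_le c)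
  rwa [Prod.mk_zero_zero, zero_add, add_comm] at h

lemma lt_add_right {a b : ℕ × ℕ} (c : ℕ × ℕ) (h : T.lt a b) : T.lt (a + c) (b + c) :=
  ⟨T.add_right _ _ _ h.1, fun he => h.2 (add_right_cancel he)⟩

lemma lt_of_add_lt_add_right {a b c : ℕ × ℕ} (h : T.lt (a + c) (b + c)) : T.lt a b := by
  refine ⟨?_, fun he => h.2 (by rw [he])⟩
  rcases T.total a b with hab | hba
  · exact hab
  · exact absurd (T.antisymm _ _ h.1 (T.add_right b a c hba)) h.2

lemma exists_isLP {L : Type} [Field L] {f : (ℕ × ℕ) →₀ L} (hf : f ≠ 0) :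
    ∃ s, IsLP T f s := by
  suffices h : ∀ S : Finset (ℕ × ℕ), S.Nonempty → ∃ s ∈ S, ∀ m ∈ S, T.le m s by
    obtain ⟨s, hs, hmax⟩ := h f.support (Finsupp.support_nonempty_iff.2 hf)
    exact ⟨s, hs, hmax⟩
  intro S hS
  induction hS using Finset.Nonempty.cons_induction with
  | singleton a => exact ⟨a, Finset.mem_singleton_self a, fun m hm => by
      rw [Finset.mem_singleton.1 hm]; exact T.refl a⟩
  | cons a S ha _ ih =>
    obtain ⟨s, hs, hmax⟩ := ih
    rcases T.total a s with has | hsa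
    · exact ⟨s, Finset.mem_cons_of_mem hs, fun m hm => by
        rcases Finset.mem_cons.1 hm with rfl | hm
        exacts [has, hmax m hm]⟩
    · exact ⟨a, Finset.mem_cons_self a S, fun m hm => by
        rcases Finset.mem_cons.1 hm with rfl | hm
        exacts [T.refl m, T.trans _ _ _ (hmax m hm) hsa]⟩

lemma le_of_mem_hypB_of_le_snd {r₁ r₂ t : ℕ} {k : ℕ × ℕ}
    (hk : k ∈ hypB r₁ r₂ (2 * t + 1)) (ht : t ≤ k.2) : T.le k (0, 2 * t - 1) := by
  obtain ⟨-, -, hprod, -, hne⟩ := hk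
  have hk₁ : k.1 = 0 := by
    by_contra hk₁
    nlinarith [Nat.one_le_iff_ne_zero.2 hk₁]
  rw [hk₁, zero_add, one_mul] at hprod
  have hk₂ : k.2 ≠ 2 * t := fun hk₂ => hne (Prod.ext hk₁ (by omega))
  have hsum : (0, 2 * t - 1) = k + (0, 2 * t - 1 - k.2) := by
    ext <;> dsimp only [Prod.fst_add, Prod.snd_add] <;> omega
  exact hsum ▸ T.le_self_add k _

lemma le_of_mem_hypB_of_le_fst {r₁ r₂ t : ℕ} {k : ℕ × ℕ}
    (hk : k ∈ hypB r₁ r₂ (2 * t + 1)) (ht : t ≤ k.1) : T.le k (2 * t - 1, 0) := by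
  obtain ⟨-, -, hprod, hne, -⟩ := hk
  have hk₂ : k.2 = 0 := by
    by_contra hk₂
    nlinarith [Nat.one_le_iff_ne_zero.2 hk₂]
  rw [hk₂, zero_add, mul_one] at hprod
  have hk₁ : k.1 ≠ 2 * t := fun hk₁ => hne (Prod.ext (by omega) hk₂)
  have hsum : (2 * t - 1, 0) = k + (2 * t - 1 - k.1, 0) := by
    ext <;> dsimp only [Prod.fst_add, Prod.snd_add] <;> omega
  exact hsum ▸ T.le_self_add k _

end MonOrd

section Update

variable {L : Type} [Field L]

lemma IsLP.sub_smul {T : MonOrd} {f g : (ℕ × ℕ) →₀ L} {s sg : ℕ × ℕ} (hf : IsLP T f s)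
    (hg : IsLP T g sg) (hlt : T.lt sg s) (c : L) : IsLP T (f - c • g) s := by
  have hgs : g s = 0 := by
    by_contra hgs
    exact hlt.2 (T.antisymm _ _ hlt.1 (hg.2 s (Finsupp.mem_support_iff.2 hgs)))
  refine ⟨?_, fun m hm => ?_⟩
  · simpa [hgs] using hf.1
  · rcases Finset.mem_union.1 (Finsupp.support_sub hm) with hm | hm
    · exact hf.2 m hm
    · exact T.trans _ _ _ (hg.2 m (Finsupp.support_smul hm)) hlt.1

lemma fApp_eq_sum {U : ℕ × ℕ → L} {f : (ℕ × ℕ) →₀ L} {s n : ℕ × ℕ} (h1 : s.1 ≤ n.1)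
    (h2 : s.2 ≤ n.2) :
    fApp U f s n = f.sum fun m c => c * U (m.1 + n.1 - s.1, m.2 + n.2 - s.2) :=
  if_pos ⟨h1, h2⟩

lemma le_of_fApp_ne_zero {U : ℕ × ℕ → L} {f : (ℕ × ℕ) →₀ L} {s n : ℕ × ℕ}
    (h : fApp U f s n ≠ 0) : s.1 ≤ n.1 ∧ s.2 ≤ n.2 := by
  by_contra hn
  exact h (if_neg hn)

lemma fApp_sub_smul (U : ℕ × ℕ → L) (f g : (ℕ × ℕ) →₀ L) (c : L) {s n : ℕ × ℕ} (sg : ℕ × ℕ)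
    (h1 : s.1 ≤ n.1) (h2 : s.2 ≤ n.2) :
    fApp U (f - c • g) s n
      = fApp U f s n - c * fApp U g sg (n.1 - s.1 + sg.1, n.2 - s.2 + sg.2) := by
  rw [fApp_eq_sum h1 h2, fApp_eq_sum h1 h2, fApp_eq_sum (by omega) (by omega),
    Finsupp.sum_sub_index (fun _ _ _ => sub_mul _ _ _),
    Finsupp.sum_smul_index (fun _ => zero_mul _), Finsupp.mul_sum]
  congr 1
  refine Finsupp.sum_congr fun m _ => ?_
  rw [mul_assoc]
  congr 3
  ext <;> dsimp only <;> omega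

variable {T : MonOrd} {U : ℕ × ℕ → L} {f g : (ℕ × ℕ) →₀ L}
  {s sg k₀ l : ℕ × ℕ} {v : L}

lemma fApp_sub_smul_eq_zero_of_le
    (hfgen : ∀ k, s.1 ≤ k.1 → s.2 ≤ k.2 → T.lt k l → fApp U f s k = 0)
    (hgpast : ∀ m, sg.1 ≤ m.1 → sg.2 ≤ m.2 → T.lt m k₀ → fApp U g sg m = 0)
    (hshift : k₀ + s = l + sg) (hv : fApp U g sg k₀ = v) (hv0 : v ≠ 0) :
    ∀ k, s.1 ≤ k.1 → s.2 ≤ k.2 → T.le k l → fApp U (f - (fApp U f s l / v) • g) s k = 0 := by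
  intro k h1 h2 hkl
  have hk₀ := le_of_fApp_ne_zero (hv ▸ hv0)
  have hshift₁ := congrArg Prod.fst hshift
  have hshift₂ := congrArg Prod.snd hshift
  simp only [Prod.fst_add, Prod.snd_add] at hshift₁ hshift₂
  rw [fApp_sub_smul U f g _ sg h1 h2]
  rcases eq_or_ne k l with rfl | hne
  · have hk₀_eq : (k.1 - s.1 + sg.1, k.2 - s.2 + sg.2) = k₀ := by
      ext <;> dsimp only <;> omega
    rw [hk₀_eq, hv, div_mul_cancel₀ _ hv0, sub_self]
  · have hlt : T.lt (k.1 - s.1 + sg.1, k.2 - s.2 + sg.2) k₀ := by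
      refine T.lt_of_add_lt_add_right (c := s) ?_
      have hk : (k.1 - s.1 + sg.1, k.2 - s.2 + sg.2) + s = k + sg := by
        ext <;> dsimp only [Prod.fst_add, Prod.snd_add] <;> omega
      rw [hk, hshift]
      exact T.lt_add_right sg ⟨hkl, hne⟩
    rw [hfgen k h1 h2 ⟨hkl, hne⟩, hgpast _ (by dsimp only; omega) (by dsimp only; omega) hlt,
      mul_zero, sub_zero]

lemma exists_sub_smul_generates_of_forall_le (P : Set (ℕ × ℕ)) (hf : IsLP T f s)
    (hg : IsLP T g sg) (hfgen : ∀ k, s.1 ≤ k.1 → s.2 ≤ k.2 → T.lt k l → fApp U f s k = 0)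
    (hgpast : ∀ m, sg.1 ≤ m.1 → sg.2 ≤ m.2 → T.lt m k₀ → fApp U g sg m = 0)
    (hk₀l : T.lt k₀ l) (hshift : k₀ + s = l + sg) (hv : fApp U g sg k₀ = v) (hv0 : v ≠ 0)
    (hP : ∀ k ∈ P, s.1 ≤ k.1 → s.2 ≤ k.2 → T.le k l) :
    ∃ b, IsLP T (f - (b / v) • g) s ∧
      (∀ k, s.1 ≤ k.1 → s.2 ≤ k.2 → T.lt k l → fApp U (f - (b / v) • g) s k = 0) ∧
      ∀ k ∈ P, fApp U (f - (b / v) • g) s k = 0 := by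
  have hlt : T.lt sg s := by
    refine T.lt_of_add_lt_add_right (c := l) ?_
    rw [add_comm sg, add_comm s, ← hshift]
    exact T.lt_add_right s hk₀l
  have hvan := fApp_sub_smul_eq_zero_of_le hfgen hgpast hshift hv hv0
  refine ⟨fApp U f s l, hf.sub_smul hg hlt _, fun k h1 h2 hkl => hvan k h1 h2 hkl.1,
    fun k hk => ?_⟩
  by_cases hsk : s.1 ≤ k.1 ∧ s.2 ≤ k.2
  · exact hvan k hsk.1 hsk.2 (hP k hk hsk.1 hsk.2)
  · exact if_neg hsk

end Update

section Syndrome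

variable {L : Type} [Field L]

lemma polyEval_eq_linearCombination (f : (ℕ × ℕ) →₀ L) (x y : L) :
    polyEval f x y = Finsupp.linearCombination L (fun m : ℕ × ℕ => x ^ m.1 * y ^ m.2) f := by
  rw [Finsupp.linearCombination_apply, polyEval, Finsupp.sum]
  exact Finset.sum_congr rfl fun m _ => by rw [smul_eq_mul, mul_assoc]

lemma exists_ne_zero_polyEval_eq_zero (M : Finset (ℕ × ℕ)) (Z : Finset (L × L))
    (h : Z.card < M.card) :
    ∃ f : (ℕ × ℕ) →₀ L, f ≠ 0 ∧ f.support ⊆ M ∧ ∀ z ∈ Z, polyEval f z.1 z.2 = 0 := by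
  let ψ := (Finsupp.supportedEquivFinsupp (M := L) (R := L) (M : Set (ℕ × ℕ))).symm
  let φ : (M →₀ L) →ₗ[L] (Z → L) := LinearMap.pi fun z =>
    Finsupp.linearCombination L (fun m : ℕ × ℕ => z.1.1 ^ m.1 * z.1.2 ^ m.2) ∘ₗ
      (Finsupp.supported L L (M : Set (ℕ × ℕ))).subtype ∘ₗ ψ.toLinearMap
  have hdim : Module.finrank L (Z → L) < Module.finrank L (M →₀ L) := by
    simpa [Module.finrank_fintype_fun_eq_card] using h
  obtain ⟨c, hker, hne⟩ :=
    Submodule.exists_mem_ne_zero_of_ne_bot (LinearMap.ker_ne_bot_of_finrank_lt (f := φ) hdim)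
  refine ⟨ψ c, fun hf => hne (ψ.map_eq_zero_iff.1 (Subtype.ext hf)),
    by exact_mod_cast (Finsupp.mem_supported L _).1 (ψ c).2, fun z hz => ?_⟩
  rw [polyEval_eq_linearCombination]
  exact congrFun (LinearMap.mem_ker.1 hker) ⟨z, hz⟩

variable {F : Type} [Field F] {r₁ r₂ : ℕ}

open Classical in
noncomputable def errorLocations (α₁ α₂ : L) (e : Fin r₁ × Fin r₂ → F) : Finset (L × L) :=
  (Finset.univ.filter fun p => e p ≠ 0).image fun p => (α₁ ^ (p.1 : ℕ), α₂ ^ (p.2 : ℕ))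

lemma card_errorLocations_le (α₁ α₂ : L) (e : Fin r₁ × Fin r₂ → F) :
    (errorLocations α₁ α₂ e).card ≤ wt e := by
  classical
  refine Finset.card_image_le.trans_eq ?_
  rw [wt, ← Set.ncard_coe_finset]
  congr 1
  ext p
  simp

variable [Algebra F L]

lemma fApp_synTable {α₁ α₂ : L} {τ : Fin r₁ × Fin r₂} {e : Fin r₁ × Fin r₂ → F}
    {f : (ℕ × ℕ) →₀ L} {s n : ℕ × ℕ} (h1 : s.1 ≤ n.1) (h2 : s.2 ≤ n.2) :
    fApp (synTable α₁ α₂ τ e) f s n = ∑ p : Fin r₁ × Fin r₂,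
      algebraMap F L (e p) * (α₁ ^ (p.1 : ℕ)) ^ ((τ.1 : ℕ) + (n.1 - s.1))
        * (α₂ ^ (p.2 : ℕ)) ^ ((τ.2 : ℕ) + (n.2 - s.2))
        * polyEval f (α₁ ^ (p.1 : ℕ)) (α₂ ^ (p.2 : ℕ)) := by
  rw [fApp_eq_sum h1 h2, Finsupp.sum]
  simp only [polyEval, synTable, Finset.mul_sum]
  rw [Finset.sum_comm]
  refine Finset.sum_congr rfl fun p _ => Finset.sum_congr rfl fun m _ => ?_
  rw [show (τ.1 : ℕ) + (m.1 + n.1 - s.1) = (τ.1 + (n.1 - s.1)) + m.1 by omega,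
    show (τ.2 : ℕ) + (m.2 + n.2 - s.2) = (τ.2 + (n.2 - s.2)) + m.2 by omega]
  ring

lemma fApp_synTable_eq_zero {α₁ α₂ : L} (τ : Fin r₁ × Fin r₂) {e : Fin r₁ × Fin r₂ → F}
    {f : (ℕ × ℕ) →₀ L} (hf : ∀ z ∈ errorLocations α₁ α₂ e, polyEval f z.1 z.2 = 0)
    (s n : ℕ × ℕ) : fApp (synTable α₁ α₂ τ e) f s n = 0 := by
  classical
  by_cases hsn : s.1 ≤ n.1 ∧ s.2 ≤ n.2
  · rw [fApp_synTable hsn.1 hsn.2]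
    refine Finset.sum_eq_zero fun p _ => ?_
    by_cases hp : e p = 0
    · simp [hp]
    · rw [hf _ (Finset.mem_image_of_mem _ (by simpa using hp)), mul_zero]
  · exact if_neg hsn

lemma mul_le_wt_of_exists_fApp_ne_zero (T : MonOrd) (α₁ α₂ : L) (τ : Fin r₁ × Fin r₂)
    (e : Fin r₁ × Fin r₂ → F) {a b : ℕ}
    (h : ∀ (g : (ℕ × ℕ) →₀ L) (sg : ℕ × ℕ), IsLP T g sg → sg.1 < a → sg.2 < b →
      ∃ n, fApp (synTable α₁ α₂ τ e) g sg n ≠ 0) :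
    a * b ≤ wt e := by
  by_contra! hlt
  obtain ⟨f, hf0, hfM, hfZ⟩ := exists_ne_zero_polyEval_eq_zero (Finset.range a ×ˢ Finset.range b)
    (errorLocations α₁ α₂ e)
    ((card_errorLocations_le α₁ α₂ e).trans_lt (by simpa using hlt))
  obtain ⟨sf, hsf⟩ := T.exists_isLP hf0
  have hsfM := Finset.mem_product.1 (hfM hsf.1)
  obtain ⟨n, hn⟩ := h f sf hsf (by simpa using hsfM.1) (by simpa using hsfM.2)
  exact hn (fApp_synTable_eq_zero τ hfZ sf n)

end Syndrome

theorem exceptional_case_axes_general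
    (F : Type) [Field F]
    (L : Type) [Field L] [Algebra F L]
    (r₁ r₂ : ℕ)
    (α₁ α₂ : L)
    (T : MonOrd)
    (t : ℕ) (ht1 : 1 ≤ t)
    (e : Fin r₁ × Fin r₂ → F) (hω : wt e ≤ t) (τ : Fin r₁ × Fin r₂)
    (U : ℕ × ℕ → L) (hU : U = synTable α₁ α₂ τ e)
    (l : ℕ × ℕ)
    (f₁ f₂ : (ℕ × ℕ) →₀ L) (s₁ s₂ : ℕ × ℕ)
    (hLP1 : IsLP T f₁ s₁) (hLP2 : IsLP T f₂ s₂)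
    (hstair1 : s₂.1 = 0) (hstair2 : s₁.2 = 0)
    (hgen1 : ∀ k : ℕ × ℕ, s₁.1 ≤ k.1 → s₁.2 ≤ k.2 → T.lt k l → fApp U f₁ s₁ k = 0)
    (hgen2 : ∀ k : ℕ × ℕ, s₂.1 ≤ k.1 → s₂.2 ≤ k.2 → T.lt k l → fApp U f₂ s₂ k = 0)
    (hmin : ∀ (g : (ℕ × ℕ) →₀ L) (sg : ℕ × ℕ), IsLP T g sg →
      sg.1 ≤ s₁.1 - 1 → sg.2 ≤ s₂.2 - 1 →
      ∃ k : ℕ × ℕ, sg.1 ≤ k.1 ∧ sg.2 ≤ k.2 ∧ T.lt k l ∧ fApp U g sg k ≠ 0)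
    (g : (ℕ × ℕ) →₀ L) (sg k₀ : ℕ × ℕ) (hgLP : IsLP T g sg)
    (hk₀l : T.lt k₀ l)
    (hgpast : ∀ m : ℕ × ℕ, sg.1 ≤ m.1 → sg.2 ≤ m.2 → T.lt m k₀ → fApp U g sg m = 0)
    (hk₀LP : (k₀.1 - sg.1, k₀.2 - sg.2) = (s₁.1 - 1, s₂.2 - 1))
    (v : L) (hv : fApp U g sg k₀ = v) (hv0 : v ≠ 0) :
    (l = (0, 2 * t - 1) ∧ s₂.2 = t →
      ∃ b : L, ∃ sh : ℕ × ℕ,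
        IsLP T (f₂ - (b / v) • g) sh ∧
        (∀ k : ℕ × ℕ, sh.1 ≤ k.1 → sh.2 ≤ k.2 → T.lt k l →
          fApp U (f₂ - (b / v) • g) sh k = 0) ∧
        (∀ k ∈ hypB r₁ r₂ (2 * t + 1), T.le l k →
          fApp U (f₂ - (b / v) • g) sh k = 0)) ∧
    (l = (2 * t - 1, 0) ∧ s₁.1 = t →
      ∃ b : L, ∃ sh : ℕ × ℕ,
        IsLP T (f₁ - (b / v) • g) sh ∧
        (∀ k : ℕ × ℕ, sh.1 ≤ k.1 → sh.2 ≤ k.2 → T.lt k l →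
          fApp U (f₁ - (b / v) • g) sh k = 0) ∧
        (∀ k ∈ hypB r₁ r₂ (2 * t + 1), T.le l k →
          fApp U (f₁ - (b / v) • g) sh k = 0)) := by
  subst hU
  have hfootprint : s₁.1 * s₂.2 ≤ t := by
    refine (mul_le_wt_of_exists_fApp_ne_zero T α₁ α₂ τ e fun g' sg' hg' h₁ h₂ => ?_).trans hω
    obtain ⟨k, -, -, -, hk⟩ := hmin g' sg' hg' (by omega) (by omega)
    exact ⟨k, hk⟩
  have hk₀ := le_of_fApp_ne_zero (hv ▸ hv0)
  have hk₀₁ := congrArg Prod.fst hk₀LP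
  have hk₀₂ := congrArg Prod.snd hk₀LP
  dsimp only at hk₀₁ hk₀₂
  constructor
  · rintro ⟨rfl, hs₂⟩
    have hs₁ : s₁.1 ≤ 1 := by nlinarith
    obtain ⟨b, hLP, hgen, hB⟩ := exists_sub_smul_generates_of_forall_le (hypB r₁ r₂ (2 * t + 1))
      hLP2 hgLP hgen2 hgpast hk₀l (by ext <;> dsimp only [Prod.fst_add, Prod.snd_add] <;> omega)
      hv hv0 fun k hk _ h₂ => T.le_of_mem_hypB_of_le_snd hk (by omega)
    exact ⟨b, s₂, hLP, hgen, fun k hk _ => hB k hk⟩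
  · rintro ⟨rfl, hs₁⟩
    have hs₂ : s₂.2 ≤ 1 := by nlinarith
    obtain ⟨b, hLP, hgen, hB⟩ := exists_sub_smul_generates_of_forall_le (hypB r₁ r₂ (2 * t + 1))
      hLP1 hgLP hgen1 hgpast hk₀l (by ext <;> dsimp only [Prod.fst_add, Prod.snd_add] <;> omega)
      hv hv0 fun k hk h₁ _ => T.le_of_mem_hypB_of_le_fst hk (by omega)
    exact ⟨b, s₁, hLP, hgen, fun k hk _ => hB k hk⟩

/-- either order; exceptional cases at the last points of the axes:
for l = (0,2t−1) with s⁽²⁾₂ = t (case a) or l = (2t−1,0) with s⁽¹⁾₁ = t (case b),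
there is b ∈ L such that h_b (= f⁽²⁾ − (b/v)·g in case a, f⁽¹⁾ − (b/v)·g in case b)
generates u^l and kills all later points of B(2t+1). -/
theorem exceptional_case_axes
    (q : ℕ) (hq : IsPrimePow q)
    (F : Type) [Field F] [Fintype F] (hF : Fintype.card F = q)
    (L : Type) [Field L] [Algebra F L]
    (r₁ r₂ : ℕ) (hr₁ : 0 < r₁) (hr₂ : 0 < r₂) (hco : Nat.Coprime q (r₁ * r₂))
    (α₁ α₂ : L) (hα₁ : IsPrimitiveRoot α₁ r₁) (hα₂ : IsPrimitiveRoot α₂ r₂)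
    (T : MonOrd) (hT : T = lexMonOrd ∨ T = grMonOrd)
    (t : ℕ) (ht1 : 1 ≤ t) (ht4 : t ≤ 4) (htr1 : t ≤ r₁ / 2) (htr2 : t ≤ r₂ / 2)
    (e : Fin r₁ × Fin r₂ → F) (hω : wt e ≤ t) (τ : Fin r₁ × Fin r₂)
    (U : ℕ × ℕ → L) (hU : U = synTable α₁ α₂ τ e)
    (l : ℕ × ℕ)
    (f₁ f₂ : (ℕ × ℕ) →₀ L) (s₁ s₂ : ℕ × ℕ)
    (hLP1 : IsLP T f₁ s₁) (hLP2 : IsLP T f₂ s₂)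
    (hstair1 : s₂.1 = 0) (hstair2 : s₁.2 = 0)
    (hstair3 : s₂.1 < s₁.1) (hstair4 : s₁.2 < s₂.2)
    (hcase : (l = (0, 2 * t - 1) ∧ s₂.2 = t) ∨ (l = (2 * t - 1, 0) ∧ s₁.1 = t))
    (hgen1 : ∀ k : ℕ × ℕ, s₁.1 ≤ k.1 → s₁.2 ≤ k.2 → T.lt k l → fApp U f₁ s₁ k = 0)
    (hgen2 : ∀ k : ℕ × ℕ, s₂.1 ≤ k.1 → s₂.2 ≤ k.2 → T.lt k l → fApp U f₂ s₂ k = 0)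
    (hmin : ∀ (g : (ℕ × ℕ) →₀ L) (sg : ℕ × ℕ), IsLP T g sg →
      sg.1 ≤ s₁.1 - 1 → sg.2 ≤ s₂.2 - 1 →
      ∃ k : ℕ × ℕ, sg.1 ≤ k.1 ∧ sg.2 ≤ k.2 ∧ T.lt k l ∧ fApp U g sg k ≠ 0)
    (g : (ℕ × ℕ) →₀ L) (sg k₀ : ℕ × ℕ) (hgLP : IsLP T g sg)
    (hk₀l : T.lt k₀ l)
    (hgpast : ∀ m : ℕ × ℕ, sg.1 ≤ m.1 → sg.2 ≤ m.2 → T.lt m k₀ → fApp U g sg m = 0)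
    (hk₀LP : (k₀.1 - sg.1, k₀.2 - sg.2) = (s₁.1 - 1, s₂.2 - 1))
    (v : L) (hv : fApp U g sg k₀ = v) (hv0 : v ≠ 0) :
    (l = (0, 2 * t - 1) ∧ s₂.2 = t →
      ∃ b : L, ∃ sh : ℕ × ℕ,
        IsLP T (f₂ - (b / v) • g) sh ∧
        (∀ k : ℕ × ℕ, sh.1 ≤ k.1 → sh.2 ≤ k.2 → T.lt k l →
          fApp U (f₂ - (b / v) • g) sh k = 0) ∧
        (∀ k ∈ hypB r₁ r₂ (2 * t + 1), T.le l k →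
          fApp U (f₂ - (b / v) • g) sh k = 0)) ∧
    (l = (2 * t - 1, 0) ∧ s₁.1 = t →
      ∃ b : L, ∃ sh : ℕ × ℕ,
        IsLP T (f₁ - (b / v) • g) sh ∧
        (∀ k : ℕ × ℕ, sh.1 ≤ k.1 → sh.2 ≤ k.2 → T.lt k l →
          fApp U (f₁ - (b / v) • g) sh k = 0) ∧
        (∀ k ∈ hypB r₁ r₂ (2 * t + 1), T.le l k →
          fApp U (f₁ - (b / v) • g) sh k = 0)) :=
  exceptional_case_axes_general F L r₁ r₂ α₁ α₂ T t ht1 e hω τ U hU l f₁ f₂ s₁ s₂ hLP1 hLP2 hstair1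
    hstair2 hgen1 hgen2 hmin g sg k₀ hgLP hk₀l hgpast hk₀LP v hv hv0
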